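/- Let c, p, δ ∈ ℝ^d, τ ≥ 0, and fix an index i. If |cᵢ − pᵢ| − τ·μ(c,p) > 0 and |cᵢ − pᵢ − δᵢ| − τ·μ(c,p+δ) ≤ 0, then |δᵢ| + (τ/d)·‖δ‖₁ ≥ |cᵢ − pᵢ| − τ·μ(c,p), where μ(a,b) = (1/d)Σⱼ|aⱼ − bⱼ|. -/
import Mathlib


/-- Mean absolute coordinate difference. -/
noncomputable def meanAbs {d : ℕ} (a b : Fin d → ℝ) : ℝ :=
  (1 / (d : ℝ)) * ∑ j, |a j - b j|

theorem l0_active_to_inactive {d : ℕ} (c p δ : Fin d → ℝ) (τ : ℝ)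
    (hτ : 0 ≤ τ) (i : Fin d)
    (h1 : 0 < |c i - p i| - τ * meanAbs c p)
    (h2 : |c i - p i - δ i| - τ * meanAbs c (fun j => p j + δ j) ≤ 0) :
    |δ i| + (τ / d) * ∑ j, |δ j| ≥ |c i - p i| - τ * meanAbs c p := by
  have hd : 0 < (d : ℝ) := by
    have := i.pos
    exact_mod_cast this
  have key : meanAbs c (fun j => p j + δ j) ≤ meanAbs c p + (1 / d) * ∑ j, |δ j| := by
    unfold meanAbs
    rw [← mul_add]
    apply mul_le_mul_of_nonneg_left _ (by positivity)
    rw [← Finset.sum_add_distrib]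
    apply Finset.sum_le_sum
    intro j _
    have : c j - (p j + δ j) = (c j - p j) + (-δ j) := by ring
    rw [this]
    calc |(c j - p j) + (-δ j)| ≤ |c j - p j| + |(-δ j)| := abs_add_le _ _
      _ = |c j - p j| + |δ j| := by rw [abs_neg]
  have htri : |c i - p i| - |δ i| ≤ |c i - p i - δ i| := by
    have := abs_sub_abs_le_abs_sub (c i - p i) (δ i)
    linarith
  have h2' : |c i - p i - δ i| ≤ τ * (meanAbs c p + (1 / d) * ∑ j, |δ j|) := by
    have := mul_le_mul_of_nonneg_left key hτ
    linarith
  have : τ * (meanAbs c p + (1 / d) * ∑ j, |δ j|)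
      = τ * meanAbs c p + (τ / d) * ∑ j, |δ j| := by ring
  linarith [this ▸ h2']
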